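/- Spectrum of the explicit Euler superoperator for the l-photon loss channel: the spectrum of E, viewed as a ℂ-linear endomorphism of the space of (n+1)×(n+1) complex matrices, equals the set {1 − Δt·(c_k + c_m)/2 : 0 ≤ k, m ≤ n}. -/
import Mathlib


open Matrix

/-- The truncated annihilation matrix on `ℂ^{n+1}`: `a e_k = √k e_{k-1}`. -/
noncomputable def ann (n : ℕ) : Matrix (Fin (n+1)) (Fin (n+1)) ℂ :=
  Matrix.of fun i j => if (i : ℕ) + 1 = (j : ℕ) then ((Real.sqrt (j : ℕ) : ℝ) : ℂ) else 0

/-- The descending factorial `c_k = k(k-1)⋯(k-l+1)` as a real number. -/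
noncomputable def cfac (l k : ℕ) : ℝ := (Nat.descFactorial k l : ℝ)

/-- The explicit Euler scheme for the `l`-photon loss Lindbladian,
`E(ρ) = ρ + Δt (L ρ Lᴴ − ½(LᴴL ρ + ρ LᴴL))` with `L = a^l`, as a `ℂ`-linear endomorphism of the
space of `(n+1)×(n+1)` complex matrices. -/
noncomputable def eulerEnd (n l : ℕ) (Δt : ℝ) :
    Module.End ℂ (Matrix (Fin (n+1)) (Fin (n+1)) ℂ) :=
  LinearMap.id + (Δt : ℂ) •
    ((LinearMap.mulRight ℂ ((ann n ^ l)ᴴ)).comp (LinearMap.mulLeft ℂ (ann n ^ l))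
      - (2⁻¹ : ℂ) • (LinearMap.mulLeft ℂ ((ann n ^ l)ᴴ * (ann n ^ l))
          + LinearMap.mulRight ℂ ((ann n ^ l)ᴴ * (ann n ^ l))))

lemma ann_pow (n l : ℕ) (i j : Fin (n+1)) :
    (ann n ^ l) i j
      = if (i : ℕ) + l = (j : ℕ)
        then ((Real.sqrt (Nat.descFactorial (j : ℕ) l) : ℝ) : ℂ) else 0 := by
  induction l generalizing i j with
  | zero =>
    simp only [pow_zero, Matrix.one_apply, Nat.add_zero, Nat.descFactorial_zero]
    by_cases h : i = j
    · simp [h]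
    · have : ¬ ((i:ℕ) = (j:ℕ)) := fun hh => h (Fin.ext hh)
      simp [h, this]
  | succ l ih =>
    rw [pow_succ, Matrix.mul_apply]
    by_cases h : (i : ℕ) + (l + 1) = (j : ℕ)
    · have hk : (i:ℕ) + l < n + 1 := by omega
      set k₀ : Fin (n+1) := ⟨(i:ℕ) + l, hk⟩ with hk₀
      rw [Finset.sum_eq_single k₀]
      · have hv : (k₀ : ℕ) = (i:ℕ) + l := rfl
        rw [ih i k₀]
        simp only [ann, Matrix.of_apply, hv]
        rw [if_pos trivial, if_pos (by omega : (i:ℕ) + l + 1 = (j:ℕ)), if_pos h]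
        have hd : Nat.descFactorial (j:ℕ) (l+1) = (j:ℕ) * Nat.descFactorial ((i:ℕ)+l) l := by
          have hje : (j : ℕ) = ((i:ℕ)+l) + 1 := by omega
          rw [hje, Nat.succ_descFactorial_succ]
        rw [hd, Nat.cast_mul, Real.sqrt_mul (by positivity)]
        push_cast
        ring
      · intro k _ hkne
        have : ¬ ((i:ℕ) + l = (k:ℕ)) := by
          intro hh
          exact hkne (Fin.ext (by rw [← hh]))
        rw [ih, if_neg this, zero_mul]
      · intro hmem; exact absurd (Finset.mem_univ k₀) hmem
    · rw [if_neg h]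
      apply Finset.sum_eq_zero
      intro k _
      rw [ih]
      by_cases hk : (i:ℕ) + l = (k:ℕ)
      · have : ¬ ((k:ℕ) + 1 = (j:ℕ)) := by omega
        simp [ann, this]
      · rw [if_neg hk, zero_mul]

lemma N_eq (n l : ℕ) :
    (ann n ^ l)ᴴ * (ann n ^ l)
      = Matrix.diagonal (fun i : Fin (n+1) => ((Nat.descFactorial (i:ℕ) l : ℝ) : ℂ)) := by
  ext i j
  rw [Matrix.mul_apply]
  by_cases hij : i = j
  · subst hij
    rw [Matrix.diagonal_apply_eq]
    by_cases hi : l ≤ (i:ℕ)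
    · have hk : (i:ℕ) - l < n + 1 := by omega
      rw [Finset.sum_eq_single (⟨(i:ℕ) - l, hk⟩ : Fin (n+1))]
      · rw [Matrix.conjTranspose_apply, ann_pow]
        have hc : ((⟨(i:ℕ) - l, hk⟩ : Fin (n+1)) : ℕ) + l = (i:ℕ) := by simp; omega
        rw [if_pos hc, Complex.star_def, Complex.conj_ofReal, ← Complex.ofReal_mul,
          Real.mul_self_sqrt (by positivity)]
      · intro k _ hkne
        rw [Matrix.conjTranspose_apply, ann_pow]
        have : ¬ ((k:ℕ) + l = (i:ℕ)) := by
          intro hh; exact hkne (Fin.ext (by simp; omega))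
        rw [if_neg this, star_zero, zero_mul]
      · intro hmem; exact absurd (Finset.mem_univ _) hmem
    · rw [Nat.descFactorial_of_lt (by omega)]
      push_cast
      rw [Finset.sum_eq_zero]
      intro k _
      rw [Matrix.conjTranspose_apply, ann_pow]
      have : ¬ ((k:ℕ) + l = (i:ℕ)) := by omega
      rw [if_neg this, star_zero, zero_mul]
  · rw [Matrix.diagonal_apply_ne _ hij, Finset.sum_eq_zero]
    intro k _
    rw [Matrix.conjTranspose_apply, ann_pow, ann_pow]
    by_cases hk : (k:ℕ) + l = (i:ℕ)
    · have : ¬ ((k:ℕ) + l = (j:ℕ)) := by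
        intro hh; exact hij (Fin.ext (by omega))
      rw [if_neg this, mul_zero]
    · rw [if_neg hk, star_zero, zero_mul]

lemma mulL (n l : ℕ) (ρ : Matrix (Fin (n+1)) (Fin (n+1)) ℂ) (i j : Fin (n+1)) :
    (ann n ^ l * ρ) i j
      = if h : (i:ℕ) + l ≤ n
        then ((Real.sqrt (Nat.descFactorial ((i:ℕ)+l) l) : ℝ) : ℂ) * ρ ⟨(i:ℕ)+l, by omega⟩ j
        else 0 := by
  rw [Matrix.mul_apply]
  by_cases h : (i:ℕ) + l ≤ n
  · rw [dif_pos h, Finset.sum_eq_single (⟨(i:ℕ)+l, by omega⟩ : Fin (n+1))]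
    · rw [ann_pow, if_pos rfl]
    · intro k _ hkne
      rw [ann_pow]
      have : ¬ ((i:ℕ) + l = (k:ℕ)) := by
        intro hh; exact hkne (Fin.ext (by simp [← hh]))
      rw [if_neg this, zero_mul]
    · intro hmem; exact absurd (Finset.mem_univ _) hmem
  · rw [dif_neg h, Finset.sum_eq_zero]
    intro k _
    rw [ann_pow]
    have : ¬ ((i:ℕ) + l = (k:ℕ)) := by omega
    rw [if_neg this, zero_mul]

lemma mulR (n l : ℕ) (σ : Matrix (Fin (n+1)) (Fin (n+1)) ℂ) (i j : Fin (n+1)) :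
    (σ * (ann n ^ l)ᴴ) i j
      = if h : (j:ℕ) + l ≤ n
        then ((Real.sqrt (Nat.descFactorial ((j:ℕ)+l) l) : ℝ) : ℂ) * σ i ⟨(j:ℕ)+l, by omega⟩
        else 0 := by
  rw [Matrix.mul_apply]
  by_cases h : (j:ℕ) + l ≤ n
  · rw [dif_pos h, Finset.sum_eq_single (⟨(j:ℕ)+l, by omega⟩ : Fin (n+1))]
    · rw [Matrix.conjTranspose_apply, ann_pow, if_pos rfl, Complex.star_def,
        Complex.conj_ofReal, mul_comm]
    · intro k _ hkne
      rw [Matrix.conjTranspose_apply, ann_pow]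
      have : ¬ ((j:ℕ) + l = (k:ℕ)) := by
        intro hh; exact hkne (Fin.ext (by simp [← hh]))
      rw [if_neg this, star_zero, mul_zero]
    · intro hmem; exact absurd (Finset.mem_univ _) hmem
  · rw [dif_neg h, Finset.sum_eq_zero]
    intro k _
    rw [Matrix.conjTranspose_apply, ann_pow]
    have : ¬ ((j:ℕ) + l = (k:ℕ)) := by omega
    rw [if_neg this, star_zero, mul_zero]


lemma euler_apply (n l : ℕ) (Δt : ℝ) (ρ : Matrix (Fin (n+1)) (Fin (n+1)) ℂ)
    (i j : Fin (n+1)) :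
    eulerEnd n l Δt ρ i j
      = (1 - (Δt:ℂ) * (((Nat.descFactorial (i:ℕ) l : ℝ):ℂ)
            + ((Nat.descFactorial (j:ℕ) l : ℝ):ℂ)) / 2) * ρ i j
        + (Δt:ℂ) * (if _ : (j:ℕ)+l ≤ n then
            ((Real.sqrt (Nat.descFactorial ((j:ℕ)+l) l) : ℝ):ℂ) *
              (if _ : (i:ℕ)+l ≤ n then
                ((Real.sqrt (Nat.descFactorial ((i:ℕ)+l) l) : ℝ):ℂ)
                  * ρ ⟨(i:ℕ)+l, by omega⟩ ⟨(j:ℕ)+l, by omega⟩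
              else 0)
          else 0) := by
  simp only [eulerEnd, LinearMap.add_apply, LinearMap.id_apply, LinearMap.smul_apply,
    LinearMap.sub_apply, LinearMap.comp_apply, LinearMap.mulLeft_apply,
    LinearMap.mulRight_apply, N_eq, Matrix.add_apply, Matrix.smul_apply, Matrix.sub_apply,
    Matrix.diagonal_mul, Matrix.mul_diagonal, smul_eq_mul]
  rw [mulR]
  simp only [mulL]
  ring

lemma descFactorial_strict_lt {l a b : ℕ} (hl : 1 ≤ l) (hab : a < b) (hb : l ≤ b) :
    Nat.descFactorial a l < Nat.descFactorial b l := by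
  have hbpos : 0 < Nat.descFactorial b l := by
    rcases Nat.eq_zero_or_pos (Nat.descFactorial b l) with h | h
    · rw [Nat.descFactorial_eq_zero_iff_lt] at h; omega
    · exact h
  by_cases ha : a < l
  · rw [Nat.descFactorial_of_lt ha]; exact hbpos
  · push_neg at ha
    obtain ⟨t, rfl⟩ : ∃ t, l = t + 1 := ⟨l - 1, by omega⟩
    have hstep : Nat.descFactorial a (t+1) < Nat.descFactorial (a+1) (t+1) := by
      rw [Nat.descFactorial_succ, Nat.succ_descFactorial_succ]
      have hdpos : 0 < Nat.descFactorial a t := by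
        rcases Nat.eq_zero_or_pos (Nat.descFactorial a t) with h | h
        · rw [Nat.descFactorial_eq_zero_iff_lt] at h; omega
        · exact h
      exact Nat.mul_lt_mul_of_lt_of_le (by omega) le_rfl hdpos
    exact lt_of_lt_of_le hstep (Nat.descFactorial_le (t+1) (by omega))

noncomputable def alph (l : ℕ) (Δt : ℝ) (k m : ℕ) : ℕ → ℂ
  | 0 => 1
  | (t+1) =>
      (-(Δt : ℂ) * ((Real.sqrt (Nat.descFactorial (k - t*l) l) : ℝ) : ℂ)
          * ((Real.sqrt (Nat.descFactorial (m - t*l) l) : ℝ) : ℂ)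
        / ((Δt * ((Nat.descFactorial k l : ℝ) + (Nat.descFactorial m l : ℝ)
            - (Nat.descFactorial (k - (t+1)*l) l : ℝ)
            - (Nat.descFactorial (m - (t+1)*l) l : ℝ)) / 2 : ℝ) : ℂ))
        * alph l Δt k m t
/-- Spectrum of the explicit Euler superoperator for the `l`-photon loss channel:
the spectrum of `E` equals `{1 − Δt (c_k + c_m)/2 : 0 ≤ k, m ≤ n}`. -/
theorem stmt3 (l n : ℕ) (hl : 1 ≤ l) (hn : l ≤ n) (Δt : ℝ) (hΔt : 0 < Δt) :
    spectrum ℂ (eulerEnd n l Δt)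
      = {z : ℂ | ∃ k m : Fin (n+1),
          z = ((1 - Δt * (cfac l k + cfac l m) / 2 : ℝ) : ℂ)} := by
  classical
  ext z
  rw [Set.mem_setOf_eq, ← Module.End.hasEigenvalue_iff_mem_spectrum]
  constructor
  · intro h
    obtain ⟨x, hx⟩ := h.exists_hasEigenvector
    have hx0 : x ≠ 0 := hx.right
    have hEx : eulerEnd n l Δt x = z • x := hx.apply_eq_smul
    obtain ⟨p, hp⟩ : ∃ p : Fin (n+1) × Fin (n+1), x p.1 p.2 ≠ 0 := by
      by_contra hc; push_neg at hc
      exact hx0 (by ext i j; simpa using hc (i, j))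
    set S := Finset.univ.filter (fun p : Fin (n+1) × Fin (n+1) => x p.1 p.2 ≠ 0) with hS
    obtain ⟨q, hqS, hqmax⟩ := Finset.exists_max_image S (fun p => (p.1:ℕ)+(p.2:ℕ))
      ⟨p, by simp [hS, hp]⟩
    have hq : x q.1 q.2 ≠ 0 := by simpa [hS] using hqS
    have hentry := congrFun (congrFun hEx q.1) q.2
    rw [euler_apply] at hentry
    have hzero : ∀ (hi : (q.1:ℕ)+l ≤ n) (hj : (q.2:ℕ)+l ≤ n),
        x ⟨(q.1:ℕ)+l, by omega⟩ ⟨(q.2:ℕ)+l, by omega⟩ = 0 := by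
      intro hi hj
      by_contra hne
      have hmem : (⟨⟨(q.1:ℕ)+l, by omega⟩, ⟨(q.2:ℕ)+l, by omega⟩⟩ :
          Fin (n+1) × Fin (n+1)) ∈ S := by simp [hS, hne]
      have := hqmax _ hmem
      simp only at this
      omega
    have hD : (if _ : ((q.2:Fin (n+1)):ℕ)+l ≤ n then
          ((Real.sqrt (Nat.descFactorial (((q.2:Fin (n+1)):ℕ)+l) l) : ℝ):ℂ) *
            (if _ : ((q.1:Fin (n+1)):ℕ)+l ≤ n then
              ((Real.sqrt (Nat.descFactorial (((q.1:Fin (n+1)):ℕ)+l) l) : ℝ):ℂ)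
                * x ⟨((q.1:Fin (n+1)):ℕ)+l, by omega⟩ ⟨((q.2:Fin (n+1)):ℕ)+l, by omega⟩
            else 0)
        else 0) = 0 := by
      by_cases hj : ((q.2:Fin (n+1)):ℕ)+l ≤ n
      · rw [dif_pos hj]
        by_cases hi : ((q.1:Fin (n+1)):ℕ)+l ≤ n
        · rw [dif_pos hi, hzero hi hj, mul_zero, mul_zero]
        · rw [dif_neg hi, mul_zero]
      · rw [dif_neg hj]
    rw [hD, mul_zero, add_zero] at hentry
    have hfin : (1 - (Δt:ℂ) * (((Nat.descFactorial ((q.1:Fin (n+1)):ℕ) l : ℝ):ℂ)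
          + ((Nat.descFactorial ((q.2:Fin (n+1)):ℕ) l : ℝ):ℂ)) / 2) * x q.1 q.2
        = z * x q.1 q.2 := by
      simpa [Matrix.smul_apply] using hentry
    have hz : z = (1 - (Δt:ℂ) * (((Nat.descFactorial ((q.1:Fin (n+1)):ℕ) l : ℝ):ℂ)
          + ((Nat.descFactorial ((q.2:Fin (n+1)):ℕ) l : ℝ):ℂ)) / 2) :=
      (mul_right_cancel₀ hq hfin).symm
    exact ⟨q.1, q.2, by rw [hz]; simp only [cfac]; push_cast; ring⟩
  · rintro ⟨k, m, rfl⟩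
    set v : Matrix (Fin (n+1)) (Fin (n+1)) ℂ := Matrix.of fun i j =>
      if ((i:ℕ) + (m:ℕ) = (j:ℕ) + (k:ℕ) ∧ (i:ℕ) ≤ (k:ℕ) ∧ l ∣ ((k:ℕ) - (i:ℕ)))
      then alph l Δt (k:ℕ) (m:ℕ) (((k:ℕ) - (i:ℕ)) / l) else 0 with hv
    have hvkm : v k m = 1 := by
      have : v k m = alph l Δt (k:ℕ) (m:ℕ) (((k:ℕ) - (k:ℕ)) / l) := by
        rw [hv]; simp only [Matrix.of_apply]
        exact if_pos ⟨by omega, le_rfl, ⟨0, by omega⟩⟩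
      rw [this, Nat.sub_self, Nat.zero_div]; rfl
    have hvne : v ≠ 0 := by
      intro h0
      have : v k m = 0 := by rw [h0]; rfl
      rw [hvkm] at this; exact one_ne_zero this
    have hev : eulerEnd n l Δt v
        = ((1 - Δt * (cfac l k + cfac l m) / 2 : ℝ) : ℂ) • v := by
      ext i j
      rw [euler_apply, Matrix.smul_apply, smul_eq_mul]
      by_cases hP : ((i:ℕ) + (m:ℕ) = (j:ℕ) + (k:ℕ) ∧ (i:ℕ) ≤ (k:ℕ)
          ∧ l ∣ ((k:ℕ) - (i:ℕ)))
      · obtain ⟨h1, h2, t, ht⟩ := hP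
        have hdiv : ((k:ℕ) - (i:ℕ)) / l = t := by
          rw [ht]; exact Nat.mul_div_cancel_left t (by omega)
        have hvij : v i j = alph l Δt (k:ℕ) (m:ℕ) t := by
          rw [hv]; simp only [Matrix.of_apply]
          rw [if_pos ⟨h1, h2, ⟨t, ht⟩⟩, hdiv]
        cases t with
        | zero =>
          have hik : (i:ℕ) = (k:ℕ) := by omega
          have hjm : (j:ℕ) = (m:ℕ) := by omega
          have hDz : (if _ : (j:ℕ)+l ≤ n then
                ((Real.sqrt (Nat.descFactorial ((j:ℕ)+l) l) : ℝ):ℂ) *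
                  (if _ : (i:ℕ)+l ≤ n then
                    ((Real.sqrt (Nat.descFactorial ((i:ℕ)+l) l) : ℝ):ℂ)
                      * v ⟨(i:ℕ)+l, by omega⟩ ⟨(j:ℕ)+l, by omega⟩
                  else 0)
              else 0) = 0 := by
            by_cases hj' : (j:ℕ)+l ≤ n
            · rw [dif_pos hj']
              by_cases hi' : (i:ℕ)+l ≤ n
              · rw [dif_pos hi']
                have hvz : v ⟨(i:ℕ)+l, by omega⟩ ⟨(j:ℕ)+l, by omega⟩ = 0 := by
                  rw [hv]; simp only [Matrix.of_apply]
                  apply if_neg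
                  rintro ⟨-, hc, -⟩
                  exact absurd (show (i:ℕ)+l ≤ (k:ℕ) from hc) (by omega)
                rw [hvz, mul_zero, mul_zero]
              · rw [dif_neg hi', mul_zero]
            · rw [dif_neg hj']
          rw [hDz, mul_zero, add_zero, hvij]
          show (1 - (Δt:ℂ) * _ / 2) * alph l Δt (k:ℕ) (m:ℕ) 0 = _ * alph l Δt (k:ℕ) (m:ℕ) 0
          rw [show alph l Δt (k:ℕ) (m:ℕ) 0 = 1 from rfl, mul_one, mul_one, hik, hjm]
          simp only [cfac]; push_cast; ring
        | succ t' =>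
          have hB : (k:ℕ) - (i:ℕ) = l * t' + l := by rw [ht, Nat.mul_succ]
          have hBl : l * t' = t' * l := Nat.mul_comm l t'
          have hil : (i:ℕ) + l ≤ (k:ℕ) := by omega
          have hjl : (j:ℕ) + l ≤ (m:ℕ) := by omega
          have hi' : (i:ℕ) + l ≤ n := by have := k.isLt; omega
          have hj' : (j:ℕ) + l ≤ n := by have := m.isLt; omega
          rw [dif_pos hj', dif_pos hi']
          have e1 : (k:ℕ) - t'*l = (i:ℕ) + l := by omega
          have e2 : (m:ℕ) - t'*l = (j:ℕ) + l := by omega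
          have e3 : (k:ℕ) - (t'+1)*l = (i:ℕ) := by
            have : (t'+1)*l = t'*l + l := by ring
            omega
          have e4 : (m:ℕ) - (t'+1)*l = (j:ℕ) := by
            have : (t'+1)*l = t'*l + l := by ring
            omega
          have hvsh : v ⟨(i:ℕ)+l, by omega⟩ ⟨(j:ℕ)+l, by omega⟩
              = alph l Δt (k:ℕ) (m:ℕ) t' := by
            rw [hv]; simp only [Matrix.of_apply, Fin.val_mk]
            have hcond : ((i:ℕ)+l) + (m:ℕ) = ((j:ℕ)+l) + (k:ℕ) ∧ (i:ℕ)+l ≤ (k:ℕ)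
                ∧ l ∣ ((k:ℕ) - ((i:ℕ)+l)) := by
              refine ⟨by omega, hil, ⟨t', by omega⟩⟩
            rw [if_pos hcond]
            congr 1
            have : (k:ℕ) - ((i:ℕ)+l) = l * t' := by omega
            rw [this]; exact Nat.mul_div_cancel_left t' (by omega)
          rw [hvij, hvsh]
          -- strict inequalities
          have hkl : l ≤ (k:ℕ) := by omega
          have hml : l ≤ (m:ℕ) := by omega
          have hlt1 : (Nat.descFactorial (i:ℕ) l : ℝ) < Nat.descFactorial (k:ℕ) l := by
            exact_mod_cast descFactorial_strict_lt hl (by omega) hkl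
          have hlt2 : (Nat.descFactorial (j:ℕ) l : ℝ) < Nat.descFactorial (m:ℕ) l := by
            exact_mod_cast descFactorial_strict_lt hl (by omega) hml
          have hδ : (Δt * ((Nat.descFactorial (k:ℕ) l : ℝ) + (Nat.descFactorial (m:ℕ) l : ℝ)
              - (Nat.descFactorial (i:ℕ) l : ℝ)
              - (Nat.descFactorial (j:ℕ) l : ℝ)) / 2 : ℝ) ≠ 0 := by
            have hpos : (0:ℝ) < Δt * ((Nat.descFactorial (k:ℕ) l : ℝ)
                + (Nat.descFactorial (m:ℕ) l : ℝ)
                - (Nat.descFactorial (i:ℕ) l : ℝ) - (Nat.descFactorial (j:ℕ) l : ℝ)) / 2 := by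
              apply div_pos _ (by norm_num)
              apply mul_pos hΔt
              linarith
            exact ne_of_gt hpos
          rw [show alph l Δt (k:ℕ) (m:ℕ) (t'+1)
              = (-(Δt : ℂ) * ((Real.sqrt (Nat.descFactorial ((k:ℕ) - t'*l) l) : ℝ) : ℂ)
                  * ((Real.sqrt (Nat.descFactorial ((m:ℕ) - t'*l) l) : ℝ) : ℂ)
                / ((Δt * ((Nat.descFactorial (k:ℕ) l : ℝ) + (Nat.descFactorial (m:ℕ) l : ℝ)
                    - (Nat.descFactorial ((k:ℕ) - (t'+1)*l) l : ℝ)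
                    - (Nat.descFactorial ((m:ℕ) - (t'+1)*l) l : ℝ)) / 2 : ℝ) : ℂ))
                * alph l Δt (k:ℕ) (m:ℕ) t' from rfl]
          rw [e1, e2, e3, e4]
          set A := alph l Δt (k:ℕ) (m:ℕ) t' with hA
          set X := ((Real.sqrt (Nat.descFactorial ((i:ℕ)+l) l) : ℝ) : ℂ) with hX
          set Y := ((Real.sqrt (Nat.descFactorial ((j:ℕ)+l) l) : ℝ) : ℂ) with hY
          set D := ((Δt * ((Nat.descFactorial (k:ℕ) l : ℝ) + (Nat.descFactorial (m:ℕ) l : ℝ)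
              - (Nat.descFactorial (i:ℕ) l : ℝ)
              - (Nat.descFactorial (j:ℕ) l : ℝ)) / 2 : ℝ) : ℂ) with hDdef
          have hδC : D ≠ 0 := by rw [hDdef]; exact_mod_cast hδ
          have hrel : (1 - (Δt:ℂ) * (((Nat.descFactorial (i:ℕ) l : ℝ):ℂ)
              + ((Nat.descFactorial (j:ℕ) l : ℝ):ℂ)) / 2)
              - ((1 - Δt * (cfac l k + cfac l m) / 2 : ℝ) : ℂ) = D := by
            rw [hDdef]; simp only [cfac]; push_cast; ring
          have hFD : (-(Δt:ℂ) * X * Y) / D * D = -(Δt:ℂ) * X * Y :=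
            div_mul_cancel₀ _ hδC
          linear_combination (((-(Δt:ℂ) * X * Y) / D) * A) * hrel + A * hFD
      · have hvij : v i j = 0 := by
          rw [hv]; simp only [Matrix.of_apply]; exact if_neg hP
        rw [hvij, mul_zero, mul_zero]
        have hD : (if _ : (j:ℕ)+l ≤ n then
              ((Real.sqrt (Nat.descFactorial ((j:ℕ)+l) l) : ℝ):ℂ) *
                (if _ : (i:ℕ)+l ≤ n then
                  ((Real.sqrt (Nat.descFactorial ((i:ℕ)+l) l) : ℝ):ℂ)
                    * v ⟨(i:ℕ)+l, by omega⟩ ⟨(j:ℕ)+l, by omega⟩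
                else 0)
            else 0) = 0 := by
          by_cases hj' : (j:ℕ)+l ≤ n
          · rw [dif_pos hj']
            by_cases hi' : (i:ℕ)+l ≤ n
            · rw [dif_pos hi']
              have hvz : v ⟨(i:ℕ)+l, by omega⟩ ⟨(j:ℕ)+l, by omega⟩ = 0 := by
                rw [hv]; simp only [Matrix.of_apply, Fin.val_mk]
                apply if_neg
                rintro ⟨hc1, hc2, hc3⟩
                refine hP ⟨by omega, by omega, ?_⟩
                have : (k:ℕ) - (i:ℕ) = ((k:ℕ) - ((i:ℕ)+l)) + l := by omega
                rw [this]
                exact Nat.dvd_add hc3 dvd_rfl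
              rw [hvz, mul_zero, mul_zero]
            · rw [dif_neg hi', mul_zero]
          · rw [dif_neg hj']
        rw [hD, mul_zero, add_zero]
    exact Module.End.hasEigenvalue_of_hasEigenvector
      ⟨Module.End.mem_eigenspace_iff.mpr hev, hvne⟩
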